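/- arXiv:2007.04243 — 3 statements merged into one kernel-verified Lean document; each statement's English description precedes it below -/
import Mathlib

section
/- For |q| < 1, the infinite product ∏_{j=1}^{∞} (1−q^j)/(1+q^j) equals the theta series ∑_{n=−∞}^{∞} (−1)^n q^{n²}. -/
open Finset Filter Topology

noncomputable section

namespace ThetaAux

/-- Gaussian binomial coefficient (base `t`), via the q-Pascal recursion. -/
def gb (t : ℝ) : ℕ → ℕ → ℝ
  | _, 0 => 1
  | 0, _+1 => 0
  | n+1, k+1 => gb t n (k+1) + t ^ (n - k) * gb t n k

@[simp] lemma gb_zero_right (t : ℝ) (n : ℕ) : gb t n 0 = 1 := by cases n <;> rfl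

lemma gb_succ_succ (t : ℝ) (n k : ℕ) :
    gb t (n+1) (k+1) = gb t n (k+1) + t ^ (n - k) * gb t n k := rfl

lemma gb_eq_zero (t : ℝ) : ∀ n k : ℕ, n < k → gb t n k = 0
  | 0, _+1, _ => rfl
  | n+1, k+1, h => by
    rw [gb_succ_succ, gb_eq_zero t n (k+1) (by omega), gb_eq_zero t n k (by omega)]
    ring

lemma gb_diag (t : ℝ) : ∀ n : ℕ, gb t n n = 1
  | 0 => rfl
  | n+1 => by
    rw [gb_succ_succ, gb_eq_zero t n (n+1) (by omega), gb_diag t n]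
    simp

/-- Gauss's q-binomial theorem. -/
theorem qbinom (t x : ℝ) (n : ℕ) :
    ∏ i ∈ range n, (1 + x * t ^ i) =
      ∑ k ∈ range (n+1), t ^ (k.choose 2) * gb t n k * x ^ k := by
  induction n with
  | zero => simp [gb]
  | succ n ih =>
    rw [prod_range_succ, ih]
    have e1 : ∑ k ∈ range (n+2), t ^ (k.choose 2) * gb t (n+1) k * x ^ k
        = (∑ k ∈ range (n+1), t ^ ((k+1).choose 2) * gb t (n+1) (k+1) * x ^ (k+1)) + 1 := by
      rw [Finset.sum_range_succ' (fun k => t ^ (k.choose 2) * gb t (n+1) k * x ^ k) (n+1)]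
      simp
    have e2 : ∑ k ∈ range (n+2), t ^ (k.choose 2) * gb t n k * x ^ k
        = ∑ k ∈ range (n+1), t ^ (k.choose 2) * gb t n k * x ^ k := by
      rw [Finset.sum_range_succ, gb_eq_zero t n (n+1) (by omega)]
      ring
    rw [e1]
    have e3 : ∀ k ∈ range (n+1),
        t ^ ((k+1).choose 2) * gb t (n+1) (k+1) * x ^ (k+1)
          = t ^ ((k+1).choose 2) * gb t n (k+1) * x ^ (k+1)
            + (t ^ (k.choose 2) * gb t n k * x ^ k) * (x * t ^ n) := by
      intro k hk
      rw [mem_range] at hk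
      rw [gb_succ_succ]
      have hc : (k+1).choose 2 + (n - k) = k.choose 2 + n := by
        have : (k+1).choose 2 = k.choose 2 + k := by
          rw [Nat.choose_succ_succ' k 1, Nat.choose_one_right]; ring
        omega
      have : t ^ ((k+1).choose 2) * (t ^ (n-k) * gb t n k) * x ^ (k+1)
          = (t ^ (k.choose 2) * gb t n k * x ^ k) * (x * t ^ n) := by
        calc t ^ ((k+1).choose 2) * (t ^ (n-k) * gb t n k) * x ^ (k+1)
            = t ^ ((k+1).choose 2 + (n-k)) * gb t n k * x ^ (k+1) := by
              rw [pow_add]; ring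
          _ = (t ^ (k.choose 2) * gb t n k * x ^ k) * (x * t ^ n) := by
              rw [hc, pow_add, pow_succ]; ring
      rw [mul_add, add_mul, this]
    rw [Finset.sum_congr rfl e3, Finset.sum_add_distrib, ← Finset.sum_mul]
    have e4 : (∑ k ∈ range (n+1), t ^ ((k+1).choose 2) * gb t n (k+1) * x ^ (k+1)) + 1
        = ∑ k ∈ range (n+1), t ^ (k.choose 2) * gb t n k * x ^ k := by
      rw [← e2, Finset.sum_range_succ' (fun k => t ^ (k.choose 2) * gb t n k * x ^ k) (n+1)]
      simp
    have := e4
    linear_combination (-1:ℝ) * e4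


/-- Partial product of the q-Pochhammer `(t;t)_m`. -/
def P (t : ℝ) (m : ℕ) : ℝ := ∏ j ∈ range m, (1 - t ^ (j+1))

@[simp] lemma P_zero (t : ℝ) : P t 0 = 1 := rfl

lemma P_succ (t : ℝ) (m : ℕ) : P t (m+1) = P t m * (1 - t ^ (m+1)) := prod_range_succ _ _

/-- Product formula for the Gaussian binomial. -/
lemma gb_mul_P (t : ℝ) : ∀ n k : ℕ, k ≤ n → gb t n k * (P t k * P t (n-k)) = P t n := by
  intro n
  induction n with
  | zero => intro k hk; interval_cases k; simp
  | succ n ih =>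
    intro k hk
    match k with
    | 0 => simp
    | k+1 =>
      rcases eq_or_lt_of_le hk with h | h
      · obtain rfl : k = n := by omega
        rw [gb_diag]
        simp
      · have hk' : k + 1 ≤ n := by omega
        have hd : n + 1 - (k+1) = (n-(k+1)) + 1 := by omega
        have hd2 : n - k = (n-(k+1)) + 1 := by omega
        set d := n - (k+1) with hdd
        have ih1 := ih (k+1) hk'
        have ih2 := ih k (by omega)
        rw [hd2, P_succ t d] at ih2
        rw [P_succ t k] at ih1
        rw [gb_succ_succ, hd2, hd, P_succ t d, P_succ t k, P_succ t n]
        have hpow : t ^ (d+1) * t ^ (k+1) = t ^ (n+1) := by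
          rw [← pow_add]; congr 1; omega
        linear_combination (1 - t^(d+1)) * ih1 + t^(d+1)*(1-t^(k+1)) * ih2 - P t n * hpow

lemma gb_nonneg {t : ℝ} (ht : 0 ≤ t) : ∀ n k : ℕ, 0 ≤ gb t n k
  | _, 0 => by simp
  | 0, _+1 => le_of_eq rfl
  | n+1, k+1 => by
    rw [gb_succ_succ]
    exact add_nonneg (gb_nonneg ht n (k+1))
      (mul_nonneg (pow_nonneg ht _) (gb_nonneg ht n k))


lemma abs_log_le {y : ℝ} (h : |y - 1| ≤ 1/2) : |Real.log y| ≤ 2 * |y - 1| := by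
  have hy : 1/2 ≤ y := by cases abs_le.1 h; linarith
  have hy0 : 0 < y := by linarith
  rw [abs_le]
  constructor
  · have h2 : Real.log y⁻¹ ≤ y⁻¹ - 1 := Real.log_le_sub_one_of_pos (by positivity)
    rw [Real.log_inv] at h2
    have h3 : y⁻¹ - 1 = (1 - y) / y := by field_simp
    have h4 : (1 - y) / y ≤ 2 * |y - 1| := by
      rw [div_le_iff₀ hy0]
      cases le_or_gt y 1 with
      | inl hle =>
        rw [abs_of_nonpos (by linarith)]
        nlinarith
      | inr hlt =>
        rw [abs_of_pos (by linarith)]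
        nlinarith
    linarith
  · have := Real.log_le_sub_one_of_pos hy0
    calc Real.log y ≤ y - 1 := this
      _ ≤ |y - 1| := le_abs_self _
      _ ≤ 2 * |y - 1| := by nlinarith [abs_nonneg (y - 1)]

lemma prod_facts {g : ℕ → ℝ} (hpos : ∀ n, 0 < g n)
    (hsum : Summable (fun n => |g n - 1|)) :
    Multipliable g ∧ 0 < ∏' n, g n ∧
      Tendsto (fun m => ∏ j ∈ range m, g j) atTop (𝓝 (∏' n, g n)) := by
  have hlim : Tendsto (fun n => |g n - 1|) atTop (𝓝 0) := hsum.tendsto_atTop_zero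
  have hev : ∀ᶠ n in atTop, ‖Real.log (g n)‖ ≤ 2 * |g n - 1| := by
    filter_upwards [hlim.eventually_le_const (by norm_num : (0:ℝ) < 1/2)] with n hn
    exact abs_log_le hn
  have hlog : Summable fun n => Real.log (g n) := by
    apply Summable.of_norm_bounded_eventually_nat (hsum.mul_left 2)
    simpa using hev
  have hp : HasProd g (Real.exp (∑' n, Real.log (g n))) := by
    have h0 := hlog.hasSum.rexp
    rwa [show (Real.exp ∘ fun n => Real.log (g n)) = g from
      funext fun n => Real.exp_log (hpos n)] at h0
  refine ⟨⟨_, hp⟩, ?_, ?_⟩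
  · rw [hp.tprod_eq]; positivity
  · rw [hp.tprod_eq]; exact hp.tendsto_prod_nat

/-- even/odd splitting of a product over `range (2*m)`. -/
lemma prod_range_two_mul (h : ℕ → ℝ) (m : ℕ) :
    ∏ j ∈ range (2*m), h j = (∏ j ∈ range m, h (2*j)) * ∏ j ∈ range m, h (2*j+1) := by
  induction m with
  | zero => simp
  | succ m ih =>
    have : 2 * (m+1) = (2*m) + 1 + 1 := by ring
    rw [this, prod_range_succ, prod_range_succ, prod_range_succ, prod_range_succ, ih]
    ring

lemma two_mul_choose_two : ∀ k : ℕ, 2 * k.choose 2 = k * (k - 1)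
  | 0 => rfl
  | k+1 => by
    have h1 : (k+1).choose 2 = k.choose 2 + k := by
      rw [Nat.choose_succ_succ' k 1, Nat.choose_one_right]; ring
    have := two_mul_choose_two k
    cases k with
    | zero => rfl
    | succ k => rw [h1, Nat.mul_add, this]; simp; ring


lemma sum_odds : ∀ m : ℕ, ∑ j ∈ range m, (2*j+1) = m^2
  | 0 => rfl
  | m+1 => by rw [sum_range_succ, sum_odds m]; ring

lemma cast_two_mul_choose_two (k : ℕ) : (2 * (k.choose 2) : ℤ) = (k:ℤ) * ((k:ℤ) - 1) := by
  cases k with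
  | zero => rfl
  | succ k =>
    have h := two_mul_choose_two (k+1)
    have : ((2 * ((k+1).choose 2) : ℕ) : ℤ) = (((k+1) * k : ℕ) : ℤ) := by
      rw [h]; simp
    push_cast at this ⊢
    rw [this]; ring

/-- The key finite identity: partial products of `(1-q^odd)²` against a
bilateral Gaussian-binomial theta sum. -/
lemma star (q : ℝ) (hq0 : q ≠ 0) (m : ℕ) :
    ∏ j ∈ range m, (1 - q^(2*j+1))^2
      = ∑ k ∈ range (2*m+1), (-1:ℝ)^(k+m) * gb (q^2) (2*m) k * q ^ (((k:ℤ) - (m:ℤ))^2) := by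
  have key := qbinom (q^2) (-(q ^ ((1:ℤ) - 2*m))) (2*m)
  -- rewrite each factor of the LHS of `key`
  set e : ℕ → ℤ := fun i => 2*i+1-2*m with he
  have hfac : ∀ i : ℕ, 1 + (-(q ^ ((1:ℤ) - 2*m))) * (q^2)^i = 1 - q ^ (e i) := by
    intro i
    have h1 : (q^2)^i = q ^ ((2*i : ℕ) : ℤ) := by
      rw [zpow_natCast, pow_mul]
    rw [h1, neg_mul, ← zpow_add₀ hq0]
    have : (1:ℤ) - 2*m + (2*i : ℕ) = e i := by simp [he]; push_cast; ring
    rw [this, sub_eq_add_neg]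
  rw [Finset.prod_congr rfl (fun i _ => hfac i)] at key
  -- multiply both sides by (-1)^m * q^(m^2)
  have key2 : (-1:ℝ)^m * q^(m^2) * ∏ i ∈ range (2*m), (1 - q ^ (e i))
      = (-1:ℝ)^m * q^(m^2) *
        ∑ k ∈ range (2*m+1), (q^2)^(k.choose 2) * gb (q^2) (2*m) k * (-(q ^ ((1:ℤ) - 2*m)))^k := by
    rw [key]
  -- LHS simplification
  have hL : (-1:ℝ)^m * q^(m^2) * ∏ i ∈ range (2*m), (1 - q ^ (e i))
      = ∏ j ∈ range m, (1 - q^(2*j+1))^2 := by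
    have h2m : 2*m = m + m := two_mul m
    rw [h2m, Finset.prod_range_add]
    have hrefl : ∏ i ∈ range m, (1 - q ^ (e (m + i)))
        = ∏ i ∈ range m, (1 - q ^ (e (m + (m - 1 - i)))) :=
      (Finset.prod_range_reflect (fun i => 1 - q ^ (e (m + i))) m).symm
    rw [hrefl]
    have hsum : ∑ i ∈ range m, (2*m-1-2*i) = ∑ i ∈ range m, (2*i+1) := by
      rw [← Finset.sum_range_reflect (fun j => 2*j+1) m]
      refine Finset.sum_congr rfl fun i hi => ?_
      rw [mem_range] at hi; omega
    have hsign : (-1:ℝ)^m * q^(m^2) = ∏ i ∈ range m, (-(q ^ (2*m-1-2*i))) := by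
      have h0 : ∀ i ∈ range m, (-(q ^ (2*m-1-2*i))) = (-1) * q ^ (2*m-1-2*i) := by
        intro i _; ring
      rw [Finset.prod_congr rfl h0, Finset.prod_mul_distrib, Finset.prod_const, card_range,
        Finset.prod_pow_eq_pow_sum, hsum, sum_odds]
    rw [hsign, ← Finset.prod_mul_distrib, ← Finset.prod_mul_distrib,
      ← Finset.prod_range_reflect (fun j => (1 - q^(2*j+1))^2) m]
    refine Finset.prod_congr rfl fun i hi => ?_
    rw [mem_range] at hi
    have hA : q ^ (2*m-1-2*i) ≠ 0 := pow_ne_zero _ hq0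
    have h1 : q ^ (e i) = (q ^ (2*m-1-2*i))⁻¹ := by
      have h : e i = -(((2*m-1-2*i : ℕ) : ℤ)) := by
        simp only [he]
        push_cast [Nat.cast_sub (by omega : 1 ≤ 2*m), Nat.cast_sub (by omega : 2*i ≤ 2*m-1)]
        omega
      rw [h, zpow_neg, zpow_natCast]
    have h2 : q ^ (e (m + (m - 1 - i))) = q ^ (2*m-1-2*i) := by
      have h : e (m + (m - 1 - i)) = ((2*m-1-2*i : ℕ) : ℤ) := by
        simp only [he]
        push_cast [Nat.cast_sub (by omega : 1 ≤ 2*m), Nat.cast_sub (by omega : 2*i ≤ 2*m-1),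
          Nat.cast_sub (by omega : 1 + i ≤ m), Nat.cast_sub (by omega : i ≤ m - 1)]
        omega
      rw [h, zpow_natCast]
    have h3 : 2*(m-1-i)+1 = 2*m-1-2*i := by omega
    rw [h1, h2, h3]
    field_simp
    ring
  -- RHS simplification
  have hR : (-1:ℝ)^m * q^(m^2) *
        ∑ k ∈ range (2*m+1), (q^2)^(k.choose 2) * gb (q^2) (2*m) k * (-(q ^ ((1:ℤ) - 2*m)))^k
      = ∑ k ∈ range (2*m+1), (-1:ℝ)^(k+m) * gb (q^2) (2*m) k * q ^ (((k:ℤ) - (m:ℤ))^2) := by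
    rw [Finset.mul_sum]
    refine Finset.sum_congr rfl fun k hk => ?_
    have hx : (-(q ^ ((1:ℤ) - 2*m)))^k = (-1:ℝ)^k * q ^ ((((1:ℤ) - 2*m)) * k) := by
      rw [neg_pow, ← zpow_natCast (q ^ ((1:ℤ) - 2*m)) k, ← zpow_mul]
    have hq2 : ((q:ℝ)^2)^(k.choose 2) = q ^ ((2 * (k.choose 2) : ℕ) : ℤ) := by
      rw [zpow_natCast, pow_mul]
    have hm2 : (q:ℝ)^(m^2) = q ^ ((m^2 : ℕ) : ℤ) := by rw [zpow_natCast]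
    have hexp : ((m^2 : ℕ) : ℤ) + ((2 * (k.choose 2) : ℕ) : ℤ) + ((1:ℤ) - 2*m) * k
        = ((k:ℤ) - (m:ℤ))^2 := by
      push_cast [cast_two_mul_choose_two]
      ring
    calc (-1:ℝ)^m * q^(m^2) *
          ((q^2)^(k.choose 2) * gb (q^2) (2*m) k * (-(q ^ ((1:ℤ) - 2*m)))^k)
        = ((-1:ℝ)^m * (-1)^k) * gb (q^2) (2*m) k *
            (q ^ ((m^2 : ℕ) : ℤ) * q ^ ((2 * (k.choose 2) : ℕ) : ℤ) * q ^ ((((1:ℤ) - 2*m)) * k)) := by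
          rw [hx, hq2, hm2]; ring
      _ = (-1:ℝ)^(k+m) * gb (q^2) (2*m) k * q ^ (((k:ℤ) - (m:ℤ))^2) := by
          rw [← zpow_add₀ hq0, ← zpow_add₀ hq0, hexp, ← pow_add]
          ring_nf
  rw [← hL, key2, hR]

end ThetaAux

open ThetaAux

theorem theta_product_eq_sum (q : ℝ) (hq : |q| < 1) :
    ∏' j : ℕ, (1 - q ^ (j + 1)) / (1 + q ^ (j + 1)) =
      ∑' n : ℤ, (-1 : ℝ) ^ n * q ^ (n ^ 2) := by
  by_cases hq0 : q = 0
  · subst hq0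
    have h1 : ∀ j : ℕ, (1 - (0:ℝ) ^ (j + 1)) / (1 + 0 ^ (j + 1)) = 1 := by
      intro j; norm_num
    rw [tprod_congr h1, tprod_one, tsum_eq_single 0 (fun n hn => ?_)]
    · norm_num
    · rw [zero_zpow _ (pow_ne_zero 2 hn), mul_zero]
  -- main case
  set a := |q| with ha_def
  have ha0 : 0 < a := abs_pos.mpr hq0
  have ha1 : a < 1 := hq
  set r := q^2 with hr_def
  have hr0 : (0:ℝ) ≤ r := sq_nonneg q
  have hr1 : r < 1 := by
    have : r = a^2 := (sq_abs q).symm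
    nlinarith
  have hqr : q ≠ 0 := hq0
  -- summability helpers
  have hgeo : Summable (fun j : ℕ => a ^ j) := summable_geometric_of_lt_one ha0.le ha1
  have habs : ∀ k : ℕ, |q ^ (k+1)| < 1 := fun k => by
    rw [abs_pow]; exact pow_lt_one₀ (abs_nonneg q) ha1 (Nat.succ_ne_zero k)
  have hpow_pos : ∀ k : ℕ, 0 < 1 - q ^ (k+1) := fun k => by
    have := habs k; rw [abs_lt] at this; linarith [this.2]
  have hpow_pos' : ∀ k : ℕ, 0 < 1 + q ^ (k+1) := fun k => by
    have := habs k; rw [abs_lt] at this; linarith [this.1]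
  -- the odd product
  obtain ⟨hm_odd, hpos_odd, hten_odd⟩ :=
    prod_facts (g := fun j => 1 - q^(2*j+1)) (fun j => hpow_pos (2*j))
      (by
        have hs : Summable (fun j : ℕ => a * (a^2)^j) :=
          (summable_geometric_of_lt_one (by positivity) (by nlinarith)).mul_left a
        refine hs.congr fun j => ?_
        show a * (a^2)^j = |(1 - q^(2*j+1)) - 1|
        rw [sub_sub_cancel_left, abs_neg, abs_pow, ← ha_def, pow_add, pow_mul, pow_one]
        ring)
  set Qinf := ∏' j : ℕ, (1 - q^(2*j+1)) with hQ_def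
  -- the even product (in terms of r)
  obtain ⟨hm_even, hpos_even, hten_even⟩ :=
    prod_facts (g := fun j => 1 - r^(j+1)) (fun j => by
        show (0:ℝ) < 1 - r^(j+1)
        have : r^(j+1) < 1 := pow_lt_one₀ hr0 hr1 (Nat.succ_ne_zero j)
        linarith)
      (by
        have hs : Summable (fun j : ℕ => r * r^j) :=
          (summable_geometric_of_lt_one hr0 hr1).mul_left r
        refine hs.congr fun j => ?_
        show r * r^j = |(1 - r^(j+1)) - 1|
        rw [sub_sub_cancel_left, abs_neg, abs_of_nonneg (by positivity), pow_succ]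
        ring)
  set Pinf := ∏' j : ℕ, (1 - r^(j+1)) with hP_def
  have hPinf_pos : 0 < Pinf := hpos_even
  have htenP : Tendsto (fun m => P r m) atTop (𝓝 Pinf) := hten_even
  -- facts about partial products P r m
  have hP_pos : ∀ m, 0 < P r m := fun m =>
    Finset.prod_pos fun j _ => by
      have : r^(j+1) < 1 := pow_lt_one₀ hr0 hr1 (Nat.succ_ne_zero j)
      linarith
  have hP_le_one : ∀ m, P r m ≤ 1 := by
    intro m
    apply Finset.prod_le_one
    · intro j _
      have : r^(j+1) < 1 := pow_lt_one₀ hr0 hr1 (Nat.succ_ne_zero j)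
      linarith
    · intro j _
      have : (0:ℝ) ≤ r^(j+1) := pow_nonneg hr0 _
      linarith
  have hP_anti : ∀ m n : ℕ, m ≤ n → P r n ≤ P r m := by
    intro m n hmn
    have key := Finset.prod_range_add (fun j => 1 - r^(j+1)) m (n-m)
    rw [show m + (n - m) = n by omega] at key
    have h : P r n = P r m * ∏ j ∈ range (n - m), (1 - r^(m+j+1)) := key
    rw [h]
    have h2 : ∏ j ∈ range (n - m), (1 - r^(m+j+1)) ≤ 1 := by
      apply Finset.prod_le_one
      · intro j _
        have : r^(m+j+1) < 1 := pow_lt_one₀ hr0 hr1 (Nat.succ_ne_zero _)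
        linarith
      · intro j _
        have : (0:ℝ) ≤ r^(m+j+1) := pow_nonneg hr0 _
        linarith
    nlinarith [hP_pos m, hP_pos n]
  have hP_ge : ∀ m, Pinf ≤ P r m := by
    intro m
    refine le_of_tendsto htenP ?_
    filter_upwards [eventually_ge_atTop m] with n hn
    exact hP_anti m n hn
  -- uniform bound on Gaussian binomials
  have hgb_le : ∀ m k : ℕ, k ≤ 2*m → gb r (2*m) k ≤ (Pinf * Pinf)⁻¹ := by
    intro m k hk
    have h := gb_mul_P r (2*m) k hk
    have hPP : 0 < Pinf * Pinf := by positivity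
    have h1 : Pinf * Pinf ≤ P r k * P r (2*m - k) :=
      mul_le_mul (hP_ge k) (hP_ge _) hPinf_pos.le (hP_pos k).le
    have h2 : gb r (2*m) k * (Pinf * Pinf) ≤ 1 := by
      calc gb r (2*m) k * (Pinf * Pinf)
          ≤ gb r (2*m) k * (P r k * P r (2*m - k)) :=
            mul_le_mul_of_nonneg_left h1 (gb_nonneg hr0 _ _)
        _ = P r (2*m) := h
        _ ≤ 1 := hP_le_one _
    rw [← one_div]
    exact (le_div_iff₀ hPP).mpr h2
  -- cast helpers
  have hcast : ∀ n : ℤ, ((n.natAbs ^ 2 : ℕ) : ℤ) = n ^ 2 := by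
    intro n
    rw [← Int.natAbs_pow]
    exact Int.natAbs_of_nonneg (sq_nonneg n)
  have hzq : ∀ n : ℤ, q ^ (n^2) = q ^ (n.natAbs ^ 2 : ℕ) := by
    intro n
    rw [← hcast n, zpow_natCast]
  have habs_q : ∀ n : ℤ, |q ^ (n^2)| ≤ a ^ n.natAbs := by
    intro n
    rw [hzq, abs_pow, ← ha_def]
    exact pow_le_pow_of_le_one ha0.le ha1.le (Nat.le_self_pow two_ne_zero _)
  have hneg1 : ∀ n : ℤ, |(-1:ℝ) ^ n| = 1 := by
    intro n
    rcases Int.even_or_odd n with h | h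
    · rw [h.neg_one_zpow]; norm_num
    · rw [h.neg_one_zpow]; norm_num
  -- the auxiliary family
  set C : ℝ := (Pinf * Pinf)⁻¹ with hC_def
  set F : ℕ → ℤ → ℝ := fun m n =>
    if n.natAbs ≤ m then (-1:ℝ)^n * gb r (2*m) ((n + m).toNat) * q^(n^2) else 0 with hF_def
  -- tsum of F m equals the star sum
  have hFsum : ∀ m : ℕ, ∑' n : ℤ, F m n = ∏ j ∈ range m, (1 - q^(2*j+1))^2 := by
    intro m
    rw [star q hq0 m]
    rw [tsum_eq_sum (s := Finset.Icc (-(m:ℤ)) (m:ℤ)) ?_]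
    · refine Finset.sum_nbij' (fun n => (n + m).toNat) (fun k => (k : ℤ) - m) ?_ ?_ ?_ ?_ ?_
      · intro n hn
        simp only [Finset.mem_Icc] at hn
        simp only [Finset.mem_range]
        omega
      · intro k hk
        simp only [Finset.mem_range] at hk
        simp only [Finset.mem_Icc]
        omega
      · intro n hn
        simp only [Finset.mem_Icc] at hn
        show ((n + (m:ℤ)).toNat : ℤ) - m = n
        omega
      · intro k hk
        simp only [Finset.mem_range] at hk
        show (((k:ℤ) - m) + m).toNat = k
        omega
      · intro n hn
        simp only [Finset.mem_Icc] at hn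
        have hna : n.natAbs ≤ m := by omega
        rw [hF_def]
        simp only [hna, if_true]
        have hk : (((n + m).toNat : ℤ)) = n + m := Int.toNat_of_nonneg (by omega)
        have hkm : (((n + m).toNat : ℤ)) - m = n := by omega
        rw [hkm]
        have hsgn : (-1:ℝ) ^ ((n + m).toNat + m) = (-1:ℝ) ^ n := by
          have h1 : (-1:ℝ) ^ ((n + m).toNat + m) = (-1:ℝ) ^ ((((n + m).toNat + m : ℕ)) : ℤ) := by
            rw [zpow_natCast]
          rw [h1]
          have h2 : ((((n + m).toNat + m : ℕ)) : ℤ) = n + 2*m := by push_cast; omega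
          rw [h2, zpow_add₀ (by norm_num : (-1:ℝ) ≠ 0) n (2*m)]
          have h3 : (-1:ℝ) ^ (2*(m:ℤ)) = 1 := by
            rw [zpow_mul]
            norm_num
          rw [h3, mul_one]
        rw [hsgn]
    · intro n hn
      simp only [Finset.mem_Icc, not_and_or, not_le] at hn
      rw [hF_def]
      simp only
      rw [if_neg (by omega)]
  -- dominated convergence
  have hbound_sum : Summable (fun n : ℤ => C * a ^ n.natAbs) := by
    apply Summable.mul_left
    apply Summable.of_nat_of_neg
    · exact hgeo.congr fun n => by simp
    · exact hgeo.congr fun n => by simp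
  have htend : ∀ n : ℤ, Tendsto (fun m => F m n) atTop
      (𝓝 (((-1:ℝ)^n * q^(n^2)) * Pinf⁻¹)) := by
    intro n
    have hten2m : Tendsto (fun m : ℕ => P r (2*m)) atTop (𝓝 Pinf) :=
      htenP.comp (tendsto_atTop_atTop.mpr fun b => ⟨b, fun c hc => by omega⟩)
    have htenk : Tendsto (fun m : ℕ => P r ((n + m).toNat)) atTop (𝓝 Pinf) :=
      htenP.comp (tendsto_atTop_atTop.mpr fun b => ⟨n.natAbs + b, fun c hc => by omega⟩)
    have htenk' : Tendsto (fun m : ℕ => P r (((m:ℤ) - n).toNat)) atTop (𝓝 Pinf) :=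
      htenP.comp (tendsto_atTop_atTop.mpr fun b => ⟨n.natAbs + b, fun c hc => by omega⟩)
    have hgbt : Tendsto (fun m => gb r (2*m) ((n + m).toNat)) atTop
        (𝓝 (Pinf * Pinf⁻¹ * Pinf⁻¹)) := by
      apply Tendsto.congr' ?_ ((hten2m.mul (htenk.inv₀ hPinf_pos.ne')).mul
        (htenk'.inv₀ hPinf_pos.ne'))
      filter_upwards [eventually_ge_atTop n.natAbs] with m hm
      have hk2m : (n + m).toNat ≤ 2*m := by omega
      have h := gb_mul_P r (2*m) ((n + m).toNat) hk2m
      have h2mk : 2*m - (n + m).toNat = ((m:ℤ) - n).toNat := by omega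
      rw [h2mk] at h
      have hk_pos := hP_pos ((n + m).toNat)
      have hk_pos' := hP_pos (((m:ℤ) - n).toNat)
      field_simp
      linarith [h]
    have : Tendsto (fun m => (-1:ℝ)^n * gb r (2*m) ((n + m).toNat) * q^(n^2)) atTop
        (𝓝 (((-1:ℝ)^n * q^(n^2)) * Pinf⁻¹)) := by
      have h := (hgbt.const_mul ((-1:ℝ)^n)).mul_const (q^(n^2))
      have hval : ((-1:ℝ)^n * q^(n^2)) * Pinf⁻¹
          = (-1:ℝ)^n * (Pinf * Pinf⁻¹ * Pinf⁻¹) * q^(n^2) := by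
        field_simp
      rw [hval]
      exact h
    apply Tendsto.congr' ?_ this
    filter_upwards [eventually_ge_atTop n.natAbs] with m hm
    rw [hF_def]
    simp only
    rw [if_pos hm]
  have hbd : ∀ m : ℕ, ∀ n : ℤ, ‖F m n‖ ≤ C * a ^ n.natAbs := by
    intro m n
    rw [hF_def, Real.norm_eq_abs]
    simp only
    by_cases h : n.natAbs ≤ m
    · rw [if_pos h, abs_mul, abs_mul, hneg1, one_mul]
      have hgb0 : 0 ≤ gb r (2*m) ((n + m).toNat) := gb_nonneg hr0 _ _
      have hgbC : gb r (2*m) ((n + m).toNat) ≤ C := hgb_le m _ (by omega)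
      rw [abs_of_nonneg hgb0]
      exact mul_le_mul hgbC (habs_q n) (abs_nonneg _) (by rw [hC_def]; positivity)
    · rw [if_neg h, abs_zero]
      have : (0:ℝ) < C := by rw [hC_def]; positivity
      positivity
  have hmain := tendsto_tsum_of_dominated_convergence hbound_sum htend
      (Filter.Eventually.of_forall hbd)
  -- identify the two limits of the squared odd partial products
  have hodd_sq : Tendsto (fun m => ∏ j ∈ range m, (1 - q^(2*j+1))^2) atTop (𝓝 (Qinf^2)) := by
    have h := hten_odd.mul hten_odd
    have heq : ∀ m, ∏ j ∈ range m, (1 - q^(2*j+1))^2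
        = (∏ j ∈ range m, (1 - q^(2*j+1))) * (∏ j ∈ range m, (1 - q^(2*j+1))) := by
      intro m; rw [← Finset.prod_mul_distrib]; exact Finset.prod_congr rfl fun j _ => sq (1 - q^(2*j+1)) ▸ rfl
    rw [show Qinf^2 = Qinf * Qinf from sq Qinf]
    exact h.congr fun m => (heq m).symm
  have hT : Qinf^2 = (∑' n : ℤ, (-1:ℝ)^n * q^(n^2)) * Pinf⁻¹ := by
    have h1 : Tendsto (fun m => ∑' n : ℤ, F m n) atTop (𝓝 (Qinf^2)) := by
      refine hodd_sq.congr fun m => (hFsum m).symm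
    have h2 := hmain
    have h3 := tendsto_nhds_unique h1 h2
    rw [h3, tsum_mul_right]
  -- the target product
  have hone_sub_ne : ∀ j : ℕ, (1 + q^(j+1)) ≠ 0 := fun j => (hpow_pos' j).ne'
  obtain ⟨hmf, hposf, htenf⟩ := prod_facts (g := fun j => (1 - q^(j+1)) / (1 + q^(j+1)))
    (fun j => div_pos (hpow_pos j) (hpow_pos' j))
    (by
      have h1a : (0:ℝ) < 1 - a := by linarith
      refine Summable.of_nonneg_of_le (fun j => abs_nonneg _) (fun j => ?_)
        ((hgeo.mul_left (2/(1-a)*a)))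
      show |(1 - q^(j+1)) / (1 + q^(j+1)) - 1| ≤ 2/(1-a)*a * a^j
      have e1 : 2/(1-a)*a*a^j = 2*a^(j+1)/(1-a) := by
        rw [pow_succ]
        field_simp
      rw [e1]
      have hx : |q^(j+1)| ≤ a := by
        rw [abs_pow, ← ha_def]
        exact pow_le_of_le_one ha0.le ha1.le (Nat.succ_ne_zero j)
      have h1x : 1 - a ≤ 1 + q^(j+1) := by
        have := (abs_le.1 hx).1; linarith
      have heq : (1 - q^(j+1))/(1 + q^(j+1)) - 1 = (-2*q^(j+1))/(1 + q^(j+1)) := by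
        field_simp [hone_sub_ne j]
        ring
      rw [heq, abs_div, abs_of_pos (hpow_pos' j)]
      apply div_le_div₀ (by positivity) ?_ h1a h1x
      rw [abs_mul, abs_pow, ← ha_def]
      norm_num)
  have htenf2 : Tendsto (fun m => ∏ j ∈ range (2*m), ((1 - q^(j+1))/(1 + q^(j+1)))) atTop
      (𝓝 (∏' j : ℕ, (1 - q^(j+1))/(1 + q^(j+1)))) :=
    htenf.comp (tendsto_atTop_atTop.mpr fun b => ⟨b, fun c hc => by omega⟩)
  -- rewrite the partial products
  have hident : ∀ m : ℕ, ∏ j ∈ range (2*m), ((1 - q^(j+1))/(1 + q^(j+1)))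
      = ((∏ j ∈ range m, (1 - q^(2*j+1))) * P r m)^2 * (P r (2*m))⁻¹ := by
    intro m
    have hstepA : ∀ M : ℕ, ∏ j ∈ range M, ((1 - q^(j+1))/(1 + q^(j+1)))
        = (∏ j ∈ range M, (1 - q^(j+1)))^2 * (P r M)⁻¹ := by
      intro M
      have hper : ∀ j ∈ range M, (1 - q^(j+1))/(1 + q^(j+1))
          = (1 - q^(j+1))^2 * (1 - r^(j+1))⁻¹ := by
        intro j _
        have hx2 : r^(j+1) = q^(j+1) * q^(j+1) := by rw [hr_def]; ring
        have hne2 : (1 - r^(j+1)) ≠ 0 := by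
          have : r^(j+1) < 1 := pow_lt_one₀ hr0 hr1 (Nat.succ_ne_zero j)
          linarith
        have hne1 : (1 - q^(j+1)) ≠ 0 := (hpow_pos j).ne'
        have h4 : 1 - q^(j+1)*q^(j+1) = (1-q^(j+1))*(1+q^(j+1)) := by ring
        rw [div_eq_mul_inv, hx2, h4, mul_inv, sq]
        rw [show (1-q^(j+1))*(1-q^(j+1))*((1-q^(j+1))⁻¹*(1+q^(j+1))⁻¹)
            = ((1-q^(j+1))*(1-q^(j+1))⁻¹)*((1-q^(j+1))*(1+q^(j+1))⁻¹) by ring,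
          mul_inv_cancel₀ hne1, one_mul]
      rw [Finset.prod_congr rfl hper, Finset.prod_mul_distrib, Finset.prod_pow,
        Finset.prod_inv_distrib]
      rfl
    have hstepB : ∏ j ∈ range (2*m), (1 - q^(j+1))
        = (∏ j ∈ range m, (1 - q^(2*j+1))) * P r m := by
      rw [prod_range_two_mul (fun j => 1 - q^(j+1)) m]
      congr 1
      refine Finset.prod_congr rfl fun j _ => ?_
      show 1 - q^(2*j+1+1) = 1 - r^(j+1)
      rw [hr_def]
      ring
    rw [hstepA (2*m), hstepB]
  have hten2m : Tendsto (fun m : ℕ => P r (2*m)) atTop (𝓝 Pinf) :=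
    htenP.comp (tendsto_atTop_atTop.mpr fun b => ⟨b, fun c hc => by omega⟩)
  have hlim2 : Tendsto (fun m => ((∏ j ∈ range m, (1 - q^(2*j+1))) * P r m)^2 * (P r (2*m))⁻¹)
      atTop (𝓝 ((Qinf * Pinf)^2 * Pinf⁻¹)) :=
    ((hten_odd.mul htenP).pow 2).mul (hten2m.inv₀ hPinf_pos.ne')
  have hfinal : (∏' j : ℕ, (1 - q^(j+1))/(1 + q^(j+1))) = (Qinf * Pinf)^2 * Pinf⁻¹ :=
    tendsto_nhds_unique (htenf2.congr fun m => hident m) hlim2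
  rw [hfinal]
  have hT' : (∑' n : ℤ, (-1:ℝ)^n * q^(n^2)) = Qinf^2 * Pinf := by
    rw [hT]
    field_simp
  rw [hT']
  field_simp
end
end

section
/- Let θ(q) = ∑_{m∈ℤ} (−1)^m q^{m²} regarded as a formal power series. For positive integers n, k with k ≤ n, the partial Bell polynomial B_{n,k}(θ'(0), θ''(0), …, θ^{(n−k+1)}(0)) equals (−1)^n · (n!/k!) · ∑_{r=1}^{k} (−1)^{k−r} C(k,r) c_r(n), where c_r(n) is the number of representations of n as an ordered signed sum of r squares. -/
open PowerSeries Finset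

/-- Number of representations of `n` as an ordered sum of `r` squares of integers. -/
noncomputable def sqRep (r n : ℕ) : ℕ := Nat.card {x : Fin r → ℤ // ∑ i, (x i) ^ 2 = (n : ℤ)}

/-- `θ(q) = ∑_{m ∈ ℤ} (-1)^m q^{m²}` as a formal power series over ℚ. -/
noncomputable def theta : PowerSeries ℚ :=
  PowerSeries.mk fun j =>
    if j = 0 then 1 else if (Nat.sqrt j) ^ 2 = j then 2 * (-1 : ℚ) ^ (Nat.sqrt j) else 0

/-- The `j`-th derivative at `0` of a power series: `h^{(j)}(0) = j! ⬝ [q^j] h`. -/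
noncomputable def derivAtZero (h : PowerSeries ℚ) (j : ℕ) : ℚ := (j.factorial : ℚ) * PowerSeries.coeff (R := ℚ) j h

/-- The partial Bell polynomial `B_{n,k}(x₁, x₂, …)`, defined via its exponential
generating function: `∑_{n ≥ k} B_{n,k}(x) qⁿ/n! = (1/k!) (∑_{j ≥ 1} x_j q^j / j!)^k`. -/
noncomputable def bell (n k : ℕ) (x : ℕ → ℚ) : ℚ :=
  (n.factorial : ℚ) * ((k.factorial : ℚ)⁻¹ *
    PowerSeries.coeff (R := ℚ) n
      ((PowerSeries.mk fun j => if j = 0 then 0 else x j / (j.factorial : ℚ)) ^ k))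
lemma int_abs_le_sq (a : ℤ) : |a| ≤ a ^ 2 := by
  rcases eq_or_ne a 0 with h | h
  · simp [h]
  · calc |a| = |a| * 1 := (mul_one _).symm
      _ ≤ |a| * |a| := mul_le_mul_of_nonneg_left (Int.one_le_abs h) (abs_nonneg a)
      _ = a ^ 2 := by rw [abs_mul_abs_self, sq]

lemma setFinite (r : ℕ) (c : ℤ) : {x : Fin r → ℤ | ∑ i, x i ^ 2 = c}.Finite := by
  apply Set.Finite.subset (Set.Finite.pi (fun i : Fin r => Set.finite_Icc (-c) c))
  intro x hx
  simp only [Set.mem_setOf_eq] at hx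
  intro i _
  have h1 : x i ^ 2 ≤ c := by
    rw [← hx]
    exact Finset.single_le_sum (fun j _ => sq_nonneg (x j)) (mem_univ i)
  have h2 : |x i| ≤ c := le_trans (int_abs_le_sq _) h1
  exact Set.mem_Icc.mpr (abs_le.mp h2)

instance instFin (r : ℕ) (c : ℤ) : Finite {x : Fin r → ℤ // ∑ i, x i ^ 2 = c} :=
  (setFinite r c).to_subtype

lemma sq_eq_iff (m s : ℤ) : m ^ 2 = s ^ 2 ↔ m = s ∨ m = -s := by
  constructor
  · intro h
    have : (m - s) * (m + s) = 0 := by ring_nf; linarith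
    rcases mul_eq_zero.mp this with h | h
    · left; linarith
    · right; linarith
  · rintro (rfl | rfl) <;> ring

lemma sqRep_one (j : ℕ) :
    sqRep 1 j = if j = 0 then 1 else if (Nat.sqrt j) ^ 2 = j then 2 else 0 := by
  have hc : sqRep 1 j = Nat.card {m : ℤ // m ^ 2 = (j : ℤ)} := by
    apply Nat.card_congr
    exact Equiv.subtypeEquiv (Equiv.funUnique (Fin 1) ℤ) (by intro x; simp)
  rw [hc]
  have hset : Nat.card {m : ℤ // m ^ 2 = (j : ℤ)} = Set.ncard {m : ℤ | m ^ 2 = (j : ℤ)} :=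
    (Nat.card_coe_set_eq _)
  rw [hset]
  by_cases h0 : j = 0
  · subst h0
    have : {m : ℤ | m ^ 2 = ((0 : ℕ) : ℤ)} = {0} := by
      ext m; simp [pow_eq_zero_iff]
    simp [this]
  · simp only [h0, if_false]
    by_cases hs : (Nat.sqrt j) ^ 2 = j
    · have hs' : ((Nat.sqrt j : ℤ)) ^ 2 = (j : ℤ) := by exact_mod_cast hs
      have hne : (Nat.sqrt j : ℤ) ≠ -(Nat.sqrt j : ℤ) := by
        have : Nat.sqrt j ≠ 0 := by
          intro h; rw [h] at hs; simp at hs; exact h0 hs.symm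
        omega
      have : {m : ℤ | m ^ 2 = (j : ℤ)} = {(Nat.sqrt j : ℤ), -(Nat.sqrt j : ℤ)} := by
        ext m
        simp only [Set.mem_setOf_eq, Set.mem_insert_iff, Set.mem_singleton_iff]
        rw [← hs', sq_eq_iff]
      rw [this, Set.ncard_pair hne]
      simp [hs]
    · have : {m : ℤ | m ^ 2 = (j : ℤ)} = ∅ := by
        ext m
        simp only [Set.mem_setOf_eq, Set.mem_empty_iff_false, iff_false]
        intro h
        have hj : j = m.natAbs ^ 2 := by
          have : (m.natAbs : ℤ) ^ 2 = (j : ℤ) := by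
            rw [← h, ← sq_abs m, Int.abs_eq_natAbs]
          exact_mod_cast this.symm
        rw [hj, Nat.sqrt_eq'] at hs
        exact hs rfl
      rw [this]
      simp [hs]

lemma sqRep_one_card (j : ℕ) : sqRep 1 j = Nat.card {m : ℤ // m ^ 2 = (j : ℤ)} := by
  apply Nat.card_congr
  exact Equiv.subtypeEquiv (Equiv.funUnique (Fin 1) ℤ) (by intro x; simp)

lemma sqRep_succ (r n : ℕ) :
    sqRep (r + 1) n = ∑ j ∈ range (n + 1), sqRep 1 j * sqRep r (n - j) := by
  classical
  set A := (setFinite (r + 1) (n : ℤ)).toFinset with hAdef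
  have hmemA : ∀ x, x ∈ A ↔ ∑ i, x i ^ 2 = (n : ℤ) := by
    intro x; rw [hAdef, Set.Finite.mem_toFinset]; rfl
  have hA : sqRep (r + 1) n = A.card := by
    rw [sqRep]
    exact (Nat.card_coe_set_eq _).trans
      (Set.ncard_eq_toFinset_card _ (setFinite (r + 1) (n : ℤ)))
  have key : ∀ x ∈ A, (x 0 ^ 2).toNat ∈ range (n + 1) := by
    intro x hx
    rw [hmemA] at hx
    have h1 : x 0 ^ 2 ≤ (n : ℤ) := by
      rw [← hx]
      exact Finset.single_le_sum (fun i _ => sq_nonneg (x i)) (mem_univ 0)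
    rw [mem_range, Nat.lt_succ_iff]
    exact Int.toNat_le.mpr h1
  rw [hA, Finset.card_eq_sum_card_fiberwise key]
  apply Finset.sum_congr rfl
  intro j hj
  rw [mem_range, Nat.lt_succ_iff] at hj
  have hfib : ∀ x, x ∈ A.filter (fun x => (x 0 ^ 2).toNat = j) ↔
      (∑ i, x i ^ 2 = (n : ℤ) ∧ x 0 ^ 2 = (j : ℤ)) := by
    intro x
    rw [mem_filter, hmemA]
    constructor
    · rintro ⟨h1, h2⟩
      exact ⟨h1, by rw [← h2, Int.toNat_of_nonneg (sq_nonneg _)]⟩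
    · rintro ⟨h1, h2⟩
      exact ⟨h1, by rw [h2]; simp⟩
  have hcast : ((n - j : ℕ) : ℤ) = (n : ℤ) - (j : ℤ) := by
    push_cast [Nat.cast_sub hj]; ring
  have e : {x : Fin (r + 1) → ℤ // x ∈ A.filter (fun x => (x 0 ^ 2).toNat = j)} ≃
      ({m : ℤ // m ^ 2 = (j : ℤ)} × {x : Fin r → ℤ // ∑ i, x i ^ 2 = ((n - j : ℕ) : ℤ)}) :=
    { toFun := fun x =>
        (⟨x.1 0, ((hfib x.1).mp x.2).2⟩,
         ⟨Fin.tail x.1, by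
            obtain ⟨h1, h2⟩ := (hfib x.1).mp x.2
            rw [Fin.sum_univ_succ] at h1
            rw [hcast]
            simp only [Fin.tail]
            linarith⟩)
      invFun := fun p =>
        ⟨Fin.cons p.1.1 p.2.1, by
          rw [hfib]
          constructor
          · rw [Fin.sum_univ_succ]
            simp only [Fin.cons_zero, Fin.cons_succ]
            rw [p.1.2, p.2.2, hcast]; ring
          · simp only [Fin.cons_zero]; exact p.1.2⟩
      left_inv := fun x => Subtype.ext (Fin.cons_self_tail x.1)
      right_inv := fun p => by
        ext
        · simp only [Fin.cons_zero]
        · simp only [Fin.tail_cons] }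
  rw [← Nat.card_eq_finsetCard, Nat.card_congr e, Nat.card_prod, sqRep_one_card, sqRep]

lemma coeff_theta (j : ℕ) : coeff (R := ℚ) j theta = (-1 : ℚ) ^ j * (sqRep 1 j : ℚ) := by
  rw [theta, coeff_mk, sqRep_one]
  by_cases h0 : j = 0
  · simp [h0]
  by_cases hs : (Nat.sqrt j) ^ 2 = j
  · simp only [h0, if_false, hs, if_true, Nat.cast_ofNat]
    have hpar : (-1 : ℚ) ^ j = (-1 : ℚ) ^ (Nat.sqrt j) := by
      rcases Nat.even_or_odd (Nat.sqrt j) with he | ho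
      · rw [he.neg_one_pow, Even.neg_one_pow]
        rw [← hs]; exact Nat.even_pow.mpr ⟨he, by norm_num⟩
      · rw [ho.neg_one_pow, Odd.neg_one_pow]
        rw [← hs]; exact ho.pow
    rw [hpar]; ring
  · simp [h0, hs]

lemma coeff_theta_pow (r n : ℕ) :
    coeff (R := ℚ) n (theta ^ r) = (-1 : ℚ) ^ n * (sqRep r n : ℚ) := by
  induction r generalizing n with
  | zero =>
    by_cases h : n = 0
    · subst h
      have : sqRep 0 0 = 1 := by
        rw [sqRep]
        have e : {x : Fin 0 → ℤ // ∑ i, x i ^ 2 = ((0 : ℕ) : ℤ)} ≃ (Fin 0 → ℤ) :=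
          Equiv.subtypeUnivEquiv (by intro x; simp)
        rw [Nat.card_congr e, Nat.card_unique]
      simp [this]
    · have : sqRep 0 n = 0 := by
        rw [sqRep]
        haveI : IsEmpty {x : Fin 0 → ℤ // ∑ i, x i ^ 2 = (n : ℤ)} :=
          ⟨fun x => h (by exact_mod_cast (by simpa using x.2 : ((0:ℤ) = (n:ℤ))).symm)⟩
        exact Nat.card_of_isEmpty
      simp [this, coeff_one, h]
  | succ r ih =>
    rw [pow_succ', coeff_mul, Finset.Nat.sum_antidiagonal_eq_sum_range_succ_mk,
      sqRep_succ, Nat.cast_sum, Finset.mul_sum]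
    apply Finset.sum_congr rfl
    intro j hj
    rw [mem_range, Nat.lt_succ_iff] at hj
    rw [coeff_theta, ih]
    have : (-1 : ℚ) ^ j * (-1 : ℚ) ^ (n - j) = (-1 : ℚ) ^ n := by
      rw [← pow_add]
      congr 1
      omega
    push_cast
    calc (-1:ℚ) ^ j * (sqRep 1 j : ℚ) * ((-1:ℚ) ^ (n-j) * (sqRep r (n-j) : ℚ))
        = ((-1:ℚ) ^ j * (-1:ℚ) ^ (n-j)) * ((sqRep 1 j : ℚ) * (sqRep r (n-j) : ℚ)) := by ring
      _ = (-1:ℚ) ^ n * ((sqRep 1 j : ℚ) * (sqRep r (n-j) : ℚ)) := by rw [this]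

theorem bell_theta_eq (n k : ℕ) (hn : 0 < n) (hk : 0 < k) (hkn : k ≤ n) :
    bell n k (derivAtZero theta) =
      (-1 : ℚ) ^ n * (n.factorial / k.factorial) *
        ∑ r ∈ Finset.Icc 1 k, (-1 : ℚ) ^ (k - r) * (k.choose r) * (sqRep r n) := by
  have hseries : (PowerSeries.mk fun j =>
      if j = 0 then 0 else derivAtZero theta j / (j.factorial : ℚ)) = theta - 1 := by
    ext j
    rw [coeff_mk, map_sub]
    by_cases h : j = 0
    · subst h
      simp [theta, coeff_mk]
    · rw [if_neg h, derivAtZero]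
      have hf : (j.factorial : ℚ) ≠ 0 := Nat.cast_ne_zero.mpr (Nat.factorial_ne_zero j)
      field_simp
      simp [h, mul_comm]
  have hsub : (theta - 1) ^ k =
      ∑ r ∈ range (k + 1), (-1 : PowerSeries ℚ) ^ (r + k) * theta ^ r * 1 ^ (k - r) * (k.choose r : PowerSeries ℚ) :=
    sub_pow theta 1 k
  have hcoeff : ∀ r, coeff (R := ℚ) n ((-1 : PowerSeries ℚ) ^ (r + k) * theta ^ r * 1 ^ (k - r) * (k.choose r : PowerSeries ℚ))
      = ((-1 : ℚ) ^ (r + k) * (k.choose r : ℚ)) * ((-1 : ℚ) ^ n * (sqRep r n : ℚ)) := by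
    intro r
    have h1 : (-1 : PowerSeries ℚ) ^ (r + k) = PowerSeries.C (R := ℚ) ((-1 : ℚ) ^ (r + k)) := by
      rw [map_pow, map_neg, map_one]
    have h2 : (k.choose r : PowerSeries ℚ) = PowerSeries.C (R := ℚ) (k.choose r : ℚ) := by
      rw [map_natCast]
    have h3 : (-1 : PowerSeries ℚ) ^ (r + k) * theta ^ r * 1 ^ (k - r) * (k.choose r : PowerSeries ℚ)
        = PowerSeries.C (R := ℚ) ((-1 : ℚ) ^ (r + k) * (k.choose r : ℚ)) * theta ^ r := by
      rw [one_pow, h1, h2, map_mul]; ring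
    rw [h3, coeff_C_mul, coeff_theta_pow]
  have hrange : range (k + 1) = insert 0 (Finset.Icc 1 k) := by
    ext m
    simp only [mem_range, mem_insert, mem_Icc, Nat.lt_succ_iff]
    omega
  rw [bell, hseries, hsub, map_sum]
  simp only [hcoeff]
  rw [hrange, Finset.sum_insert (by simp)]
  have hzero : ((-1 : ℚ) ^ (0 + k) * (k.choose 0 : ℚ)) * ((-1 : ℚ) ^ n * (sqRep 0 n : ℚ)) = 0 := by
    have : sqRep 0 n = 0 := by
      rw [sqRep]
      haveI : IsEmpty {x : Fin 0 → ℤ // ∑ i, x i ^ 2 = (n : ℤ)} :=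
        ⟨fun x => hn.ne' (by exact_mod_cast (by simpa using x.2 : ((0:ℤ) = (n:ℤ))).symm)⟩
      exact Nat.card_of_isEmpty
    simp [this]
  rw [hzero, zero_add, Finset.mul_sum, Finset.mul_sum, Finset.mul_sum]
  apply Finset.sum_congr rfl
  intro r hr
  rw [mem_Icc] at hr
  have hsign : (-1 : ℚ) ^ (r + k) = (-1 : ℚ) ^ (k - r) := by
    rw [show r + k = (k - r) + 2 * r by omega, pow_add, pow_mul]
    simp
  have hf : (k.factorial : ℚ) ≠ 0 := Nat.cast_ne_zero.mpr (Nat.factorial_ne_zero k)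
  rw [hsign]
  field_simp
end

section
/- (Faà di Bruno via Bell polynomials, formal power series version) If f and g are formal power series over ℚ with g(0) in the domain of f (e.g., composing f with g−g(0) shifted appropriately), then for n ≥ 1, the n-th derivative at 0 of f∘g equals ∑_{k=1}^{n} f^{(k)}(g(0)) · B_{n,k}(g'(0), g''(0), …, g^{(n−k+1)}(0)). -/
/-- The partial Bell polynomial `B_{n,k}` over ℝ, defined via its exponential
generating function: `∑_{n ≥ k} B_{n,k}(x) qⁿ/n! = (1/k!) (∑_{j ≥ 1} x_j q^j / j!)^k`. -/
noncomputable def bellR (n k : ℕ) (x : ℕ → ℝ) : ℝ :=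
  (n.factorial : ℝ) * ((k.factorial : ℝ)⁻¹ *
    PowerSeries.coeff n
      ((PowerSeries.mk fun j => if j = 0 then 0 else x j / (j.factorial : ℝ)) ^ k))


noncomputable def eeg (g : ℝ → ℝ) (a : ℕ) (x : ℝ) : ℝ :=
  if a = 0 then 0 else iteratedDeriv a g x / (a.factorial : ℝ)

noncomputable def ccg (g : ℝ → ℝ) : ℕ → ℕ → ℝ → ℝ
  | 0, n, _ => if n = 0 then 1 else 0
  | k+1, n, x => ∑ p ∈ Finset.HasAntidiagonal.antidiagonal n, eeg g p.1 x * ccg g k p.2 x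

lemma ccg_zero (g : ℝ → ℝ) (n : ℕ) (x : ℝ) : ccg g 0 n x = if n = 0 then 1 else 0 := rfl

lemma ccg_succ (g : ℝ → ℝ) (k n : ℕ) (x : ℝ) :
    ccg g (k+1) n x = ∑ p ∈ Finset.HasAntidiagonal.antidiagonal n, eeg g p.1 x * ccg g k p.2 x := rfl

lemma ccg_eq_zero (g : ℝ → ℝ) : ∀ k n, n < k → ∀ x, ccg g k n x = 0 := by
  intro k
  induction k with
  | zero => omega
  | succ k ih =>
    intro n hn x
    rw [ccg_succ]
    refine Finset.sum_eq_zero fun p hp => ?_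
    rw [Finset.HasAntidiagonal.mem_antidiagonal] at hp
    rcases Nat.eq_zero_or_pos p.1 with h0 | h0
    · simp [eeg, h0]
    · rw [ih p.2 (by omega) x, mul_zero]

lemma ccg_coeff (g : ℝ → ℝ) (x : ℝ) : ∀ k n, ccg g k n x =
    PowerSeries.coeff n ((PowerSeries.mk fun j => eeg g j x) ^ k) := by
  intro k
  induction k with
  | zero => intro n; simp [ccg_zero, PowerSeries.coeff_one, eq_comm]
  | succ k ih =>
    intro n
    rw [ccg_succ, pow_succ', PowerSeries.coeff_mul]
    exact Finset.sum_congr rfl fun p _ => by rw [PowerSeries.coeff_mk, ih]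

lemma hasDerivAt_eeg (g : ℝ → ℝ) (hg : ContDiff ℝ (⊤ : ℕ∞) g) (a : ℕ) (x : ℝ) :
    HasDerivAt (fun y => eeg g a y)
      (if a = 0 then 0 else iteratedDeriv (a+1) g x / (a.factorial : ℝ)) x := by
  rcases Nat.eq_zero_or_pos a with h0 | h0
  · simpa [eeg, h0] using hasDerivAt_const x (0:ℝ)
  · have h1 : a ≠ 0 := by omega
    simp only [eeg, h1, if_neg]
    have hd : ContDiff ℝ (⊤ : ℕ∞) (iteratedDeriv a g) := by
      rw [iteratedDeriv_eq_iterate]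
      exact hg.iterate_deriv a
    have hda : HasDerivAt (iteratedDeriv a g) (iteratedDeriv (a+1) g x) x := by
      have := (hd.differentiable (by simp)).differentiableAt (x := x)
      simpa [iteratedDeriv_succ] using this.hasDerivAt
    simpa [div_eq_mul_inv] using hda.mul_const ((a.factorial : ℝ)⁻¹)

lemma hasDerivAt_ccg (g : ℝ → ℝ) (hg : ContDiff ℝ (⊤ : ℕ∞) g) :
    ∀ k n x, HasDerivAt (fun y => ccg g k n y)
      (((n : ℝ) + 1) * ccg g k (n+1) x - (k : ℝ) * eeg g 1 x * ccg g (k-1) n x) x := by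
  intro k
  induction k with
  | zero =>
    intro n x
    have h0 : ccg g 0 (n+1) x = 0 := by simp [ccg_zero]
    have : HasDerivAt (fun _ : ℝ => if n = 0 then (1:ℝ) else 0) 0 x := hasDerivAt_const _ _
    simpa [ccg_zero, h0] using this
  | succ k ih =>
    intro n x
    have H : HasDerivAt (fun y => ∑ p ∈ Finset.HasAntidiagonal.antidiagonal n, eeg g p.1 y * ccg g k p.2 y)
        (∑ p ∈ Finset.HasAntidiagonal.antidiagonal n,
          ((if p.1 = 0 then 0 else iteratedDeriv (p.1+1) g x / (p.1.factorial : ℝ))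
              * ccg g k p.2 x
            + eeg g p.1 x * (((p.2 : ℝ) + 1) * ccg g k (p.2+1) x
                - (k : ℝ) * eeg g 1 x * ccg g (k-1) p.2 x))) x :=
      HasDerivAt.fun_sum fun p _ => (hasDerivAt_eeg g hg p.1 x).mul (ih p.2 x)
    have hfun : (fun y => ccg g (k+1) n y)
        = fun y => ∑ p ∈ Finset.HasAntidiagonal.antidiagonal n, eeg g p.1 y * ccg g k p.2 y := by
      funext y; rw [ccg_succ]
    rw [hfun]
    convert H using 1
    -- now the algebraic identity
    have h7 : ∑ p ∈ Finset.HasAntidiagonal.antidiagonal n, eeg g p.1 x * ((k:ℝ) * eeg g 1 x * ccg g (k-1) p.2 x)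
        = (k:ℝ) * eeg g 1 x * ccg g k n x := by
      cases k with
      | zero => simp
      | succ j =>
        rw [ccg_succ, Finset.mul_sum]
        refine Finset.sum_congr rfl fun p _ => ?_
        simp only [Nat.add_sub_cancel]
        ring
    have h6 : ∑ p ∈ Finset.HasAntidiagonal.antidiagonal n, (if p.1 = 0 then eeg g 1 x else 0) * ccg g k p.2 x
        = eeg g 1 x * ccg g k n x := by
      rw [Finset.sum_eq_single (0, n)]
      · simp
      · intro p hp hne
        rcases Nat.eq_zero_or_pos p.1 with h0 | h0
        · exfalso; apply hne
          have := Finset.HasAntidiagonal.mem_antidiagonal.mp hp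
          have : p.2 = n := by omega
          exact Prod.ext h0 this
        · rw [if_neg (by omega : ¬ p.1 = 0), zero_mul]
      · intro h; exact absurd (Finset.HasAntidiagonal.mem_antidiagonal.mpr (by simp)) h
    have hA : ((n:ℝ)+1) * ccg g (k+1) (n+1) x
        = ∑ p ∈ Finset.HasAntidiagonal.antidiagonal (n+1),
            ((p.1:ℝ) * (eeg g p.1 x * ccg g k p.2 x) + (p.2:ℝ) * (eeg g p.1 x * ccg g k p.2 x)) := by
      rw [ccg_succ, Finset.mul_sum]
      refine Finset.sum_congr rfl fun p hp => ?_
      have hmem := Finset.HasAntidiagonal.mem_antidiagonal.mp hp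
      have hc : (p.1:ℝ) + (p.2:ℝ) = (n:ℝ) + 1 := by exact_mod_cast congrArg (Nat.cast : ℕ → ℝ) hmem
      rw [← hc]; ring
    have hB : ∑ p ∈ Finset.HasAntidiagonal.antidiagonal (n+1), (p.1:ℝ) * (eeg g p.1 x * ccg g k p.2 x)
        = ∑ p ∈ Finset.HasAntidiagonal.antidiagonal n, ((p.1:ℝ)+1) * (eeg g (p.1+1) x * ccg g k p.2 x) := by
      rw [Finset.Nat.sum_antidiagonal_succ]
      push_cast
      simp
    have hC : ∑ p ∈ Finset.HasAntidiagonal.antidiagonal (n+1), (p.2:ℝ) * (eeg g p.1 x * ccg g k p.2 x)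
        = ∑ p ∈ Finset.HasAntidiagonal.antidiagonal n, ((p.2:ℝ)+1) * (eeg g p.1 x * ccg g k (p.2+1) x) := by
      rw [Finset.Nat.sum_antidiagonal_succ']
      push_cast
      simp
    have hD : ∀ p : ℕ × ℕ, ((p.1:ℝ)+1) * eeg g (p.1+1) x
        = (if p.1 = 0 then 0 else iteratedDeriv (p.1+1) g x / (p.1.factorial : ℝ))
          + (if p.1 = 0 then eeg g 1 x else 0) := by
      intro p
      rcases p with ⟨a, b⟩
      cases a with
      | zero => simp [eeg]
      | succ a =>
        simp only [Nat.succ_ne_zero, if_neg, if_false, add_zero, eeg]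
        have hfac : (((a+1)+1).factorial : ℝ) = ((a:ℝ)+2) * ((a+1).factorial : ℝ) := by
          rw [Nat.factorial_succ]; push_cast; ring
        have hpos : ((a+1).factorial : ℝ) ≠ 0 := by positivity
        rw [hfac]
        push_cast
        field_simp
        ring
    have hBD : ∑ p ∈ Finset.HasAntidiagonal.antidiagonal n, ((p.1:ℝ)+1) * (eeg g (p.1+1) x * ccg g k p.2 x)
        = ∑ p ∈ Finset.HasAntidiagonal.antidiagonal n,
            ((if p.1 = 0 then 0 else iteratedDeriv (p.1+1) g x / (p.1.factorial : ℝ))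
              * ccg g k p.2 x)
          + ∑ p ∈ Finset.HasAntidiagonal.antidiagonal n, (if p.1 = 0 then eeg g 1 x else 0) * ccg g k p.2 x := by
      rw [← Finset.sum_add_distrib]
      refine Finset.sum_congr rfl fun p _ => ?_
      rw [← add_mul, ← hD p]; ring
    have hsplit : ∑ p ∈ Finset.HasAntidiagonal.antidiagonal n,
          ((if p.1 = 0 then 0 else iteratedDeriv (p.1+1) g x / (p.1.factorial : ℝ))
              * ccg g k p.2 x
            + eeg g p.1 x * (((p.2 : ℝ) + 1) * ccg g k (p.2+1) x
                - (k : ℝ) * eeg g 1 x * ccg g (k-1) p.2 x))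
        = ∑ p ∈ Finset.HasAntidiagonal.antidiagonal n,
            ((if p.1 = 0 then 0 else iteratedDeriv (p.1+1) g x / (p.1.factorial : ℝ))
              * ccg g k p.2 x)
          + ∑ p ∈ Finset.HasAntidiagonal.antidiagonal n, ((p.2:ℝ)+1) * (eeg g p.1 x * ccg g k (p.2+1) x)
          - ∑ p ∈ Finset.HasAntidiagonal.antidiagonal n, eeg g p.1 x * ((k:ℝ) * eeg g 1 x * ccg g (k-1) p.2 x) := by
      rw [← Finset.sum_add_distrib, ← Finset.sum_sub_distrib]
      refine Finset.sum_congr rfl fun p _ => ?_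
      ring
    rw [hsplit, h7, hA, Finset.sum_add_distrib, hB, hC, hBD, h6]
    push_cast
    ring

lemma hasDerivAt_iteratedDeriv' (f : ℝ → ℝ) (hf : ContDiff ℝ (⊤ : ℕ∞) f) (k : ℕ) (x : ℝ) :
    HasDerivAt (iteratedDeriv k f) (iteratedDeriv (k+1) f x) x := by
  have hd : ContDiff ℝ (⊤ : ℕ∞) (iteratedDeriv k f) := by
    rw [iteratedDeriv_eq_iterate]; exact hf.iterate_deriv k
  have := (hd.differentiable (by simp)).differentiableAt (x := x)
  simpa [iteratedDeriv_succ] using this.hasDerivAt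

lemma eeg_one (g : ℝ → ℝ) (x : ℝ) : eeg g 1 x = deriv g x := by
  simp [eeg, iteratedDeriv_one]

lemma faa_main (f g : ℝ → ℝ) (hf : ContDiff ℝ (⊤ : ℕ∞) f) (hg : ContDiff ℝ (⊤ : ℕ∞) g) :
    ∀ n x, iteratedDeriv n (f ∘ g) x
      = ∑ k ∈ Finset.range (n+2), iteratedDeriv k f (g x)
          * ((n.factorial : ℝ) * ((k.factorial : ℝ)⁻¹ * ccg g k n x)) := by
  intro n
  induction n with
  | zero =>
    intro x
    simp [Finset.sum_range_succ, ccg_succ, ccg_zero, eeg, Function.comp]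
  | succ n ih =>
    intro x
    have hF : ∀ k : ℕ, HasDerivAt (fun y => iteratedDeriv k f (g y))
        (iteratedDeriv (k+1) f (g x) * deriv g x) x := fun k =>
      (hasDerivAt_iteratedDeriv' f hf k (g x)).comp x
        ((hg.differentiable (by simp)).differentiableAt.hasDerivAt)
    have hstep : HasDerivAt (fun y => ∑ k ∈ Finset.range (n+2), iteratedDeriv k f (g y)
          * ((n.factorial : ℝ) * ((k.factorial : ℝ)⁻¹ * ccg g k n y)))
        (∑ k ∈ Finset.range (n+2),
          (iteratedDeriv (k+1) f (g x) * deriv g x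
              * ((n.factorial : ℝ) * ((k.factorial : ℝ)⁻¹ * ccg g k n x))
            + iteratedDeriv k f (g x) * ((n.factorial : ℝ) * ((k.factorial : ℝ)⁻¹
                * (((n:ℝ)+1) * ccg g k (n+1) x - (k:ℝ) * eeg g 1 x * ccg g (k-1) n x))))) x :=
      HasDerivAt.fun_sum fun k _ => (hF k).mul
        (((hasDerivAt_ccg g hg k n x).const_mul ((k.factorial : ℝ)⁻¹)).const_mul (n.factorial : ℝ))
    have hLHS : iteratedDeriv (n+1) (f ∘ g) x
        = ∑ k ∈ Finset.range (n+2),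
          (iteratedDeriv (k+1) f (g x) * deriv g x
              * ((n.factorial : ℝ) * ((k.factorial : ℝ)⁻¹ * ccg g k n x))
            + iteratedDeriv k f (g x) * ((n.factorial : ℝ) * ((k.factorial : ℝ)⁻¹
                * (((n:ℝ)+1) * ccg g k (n+1) x - (k:ℝ) * eeg g 1 x * ccg g (k-1) n x)))) := by
      rw [iteratedDeriv_succ]
      have : iteratedDeriv n (f ∘ g) = fun y => ∑ k ∈ Finset.range (n+2),
          iteratedDeriv k f (g y) * ((n.factorial : ℝ) * ((k.factorial : ℝ)⁻¹ * ccg g k n y)) :=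
        funext ih
      rw [this, hstep.deriv]
    rw [hLHS]
    -- now the algebra
    set A : ℕ → ℝ := fun k => iteratedDeriv (k+1) f (g x) * deriv g x
        * ((n.factorial : ℝ) * ((k.factorial : ℝ)⁻¹ * ccg g k n x)) with hAdef
    set B1 : ℕ → ℝ := fun k => iteratedDeriv k f (g x)
        * ((n.factorial : ℝ) * ((k.factorial : ℝ)⁻¹ * (((n:ℝ)+1) * ccg g k (n+1) x))) with hB1def
    set B2 : ℕ → ℝ := fun k => iteratedDeriv k f (g x)
        * ((n.factorial : ℝ) * ((k.factorial : ℝ)⁻¹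
            * ((k:ℝ) * eeg g 1 x * ccg g (k-1) n x))) with hB2def
    have hsplit : ∑ k ∈ Finset.range (n+2),
          (iteratedDeriv (k+1) f (g x) * deriv g x
              * ((n.factorial : ℝ) * ((k.factorial : ℝ)⁻¹ * ccg g k n x))
            + iteratedDeriv k f (g x) * ((n.factorial : ℝ) * ((k.factorial : ℝ)⁻¹
                * (((n:ℝ)+1) * ccg g k (n+1) x - (k:ℝ) * eeg g 1 x * ccg g (k-1) n x))))
        = ∑ k ∈ Finset.range (n+2), A k + ∑ k ∈ Finset.range (n+2), B1 k
          - ∑ k ∈ Finset.range (n+2), B2 k := by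
      rw [← Finset.sum_add_distrib, ← Finset.sum_sub_distrib]
      refine Finset.sum_congr rfl fun k _ => ?_
      simp only [hAdef, hB1def, hB2def]
      ring
    have hB2A : ∀ k : ℕ, B2 (k+1) = A k := by
      intro k
      simp only [hAdef, hB2def, Nat.add_sub_cancel, eeg_one]
      have hfac : ((k+1).factorial : ℝ) = ((k:ℝ)+1) * (k.factorial : ℝ) := by
        rw [Nat.factorial_succ]; push_cast; ring
      have h1 : (k.factorial : ℝ) ≠ 0 := by positivity
      have h2 : ((k:ℝ)+1) ≠ 0 := by positivity
      rw [hfac]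
      push_cast
      field_simp
    have hB2sum : ∑ k ∈ Finset.range (n+2), B2 k = ∑ k ∈ Finset.range (n+1), A k := by
      rw [Finset.sum_range_succ']
      have : B2 0 = 0 := by simp [hB2def]
      rw [this, add_zero]
      exact Finset.sum_congr rfl fun k _ => hB2A k
    have hAtop : A (n+1) = 0 := by
      simp [hAdef, ccg_eq_zero g (n+1) n (by omega) x]
    have hT : ∑ k ∈ Finset.range (n+1+2), iteratedDeriv k f (g x)
          * (((n+1).factorial : ℝ) * ((k.factorial : ℝ)⁻¹ * ccg g k (n+1) x))
        = ∑ k ∈ Finset.range (n+2), B1 k := by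
      rw [Finset.sum_range_succ]
      have : ccg g (n+2) (n+1) x = 0 := ccg_eq_zero g (n+2) (n+1) (by omega) x
      rw [this]
      simp only [mul_zero, add_zero]
      refine Finset.sum_congr rfl fun k _ => ?_
      simp only [hB1def]
      rw [Nat.factorial_succ]
      push_cast
      ring
    rw [hsplit, hB2sum, hT, Finset.sum_range_succ, hAtop]
    ring

/-- Faà di Bruno's formula via partial Bell polynomials. -/
theorem faa_di_bruno (f g : ℝ → ℝ) (hf : ContDiff ℝ (⊤ : ℕ∞) f) (hg : ContDiff ℝ (⊤ : ℕ∞) g)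
    (n : ℕ) (hn : 1 ≤ n) :
    iteratedDeriv n (f ∘ g) 0 =
      ∑ k ∈ Finset.Icc 1 n, (iteratedDeriv k f (g 0)) *
        bellR n k (fun j => iteratedDeriv j g 0) := by
  have hf' : ContDiff ℝ (⊤ : ℕ∞) f := hf.of_le (mod_cast le_top)
  have hg' : ContDiff ℝ (⊤ : ℕ∞) g := hg.of_le (mod_cast le_top)
  have hbell : ∀ k, bellR n k (fun j => iteratedDeriv j g 0)
      = (n.factorial : ℝ) * ((k.factorial : ℝ)⁻¹ * ccg g k n 0) := by
    intro k
    have hmk : (PowerSeries.mk fun j =>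
        if j = 0 then 0 else iteratedDeriv j g 0 / (j.factorial : ℝ))
        = PowerSeries.mk fun j => eeg g j 0 := rfl
    rw [bellR, hmk, ← ccg_coeff]
  rw [faa_main f g hf' hg' n 0]
  have hsub : Finset.Icc 1 n ⊆ Finset.range (n+2) := by
    intro k hk
    rw [Finset.mem_Icc] at hk
    rw [Finset.mem_range]
    omega
  have hz : ∀ k ∈ Finset.range (n+2), k ∉ Finset.Icc 1 n →
      iteratedDeriv k f (g 0) * ((n.factorial : ℝ) * ((k.factorial : ℝ)⁻¹ * ccg g k n 0)) = 0 := by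
    intro k _ hk
    rw [Finset.mem_Icc] at hk
    rcases Nat.eq_zero_or_pos k with h0 | h0
    · subst h0
      rw [ccg_zero]
      simp [Nat.pos_iff_ne_zero.mp hn]
    · have : n < k := by omega
      rw [ccg_eq_zero g k n this 0]
      simp
  rw [← Finset.sum_subset hsub hz]
  exact Finset.sum_congr rfl fun k _ => by rw [hbell k]
end
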